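/- arXiv:2309.13964 — 3 statements merged into one kernel-verified Lean document; each statement's English description precedes it below -/
import Mathlib

section
/- Let k be a commutative ring, A a k-algebra, e an idempotent of A, and Λ := eAe. Then the map ρ: Z(Λ) → End_{A^e}(Ae ⊗_Λ eA), sending λ ∈ Z(Λ) to the endomorphism ρ_λ: ae ⊗ eb ↦ aeλ ⊗ eb (a,b ∈ A), is an isomorphism of k-algebras from the center of Λ to the endomorphism algebra of the A-A-bimodule Ae ⊗_Λ eA. Moreover, for every λ ∈ Z(Λ) the map ω_λ equals the composite ρ_λ ∘ ω_e. -/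
/-!
Common setup: bimodules over a ring `A`, a universal-property description of the
`A`-`A`-bimodule `Ae ⊗_{eAe} eA` (with distinguished element `u = e ⊗ e`),
a universal-property description of tensor products of bimodules over `A`,
and the center of the corner ring `eAe`.
-/

open MulOpposite

universe u

namespace Paper

/-- A bundled `A`-`A`-bimodule, encoded via commuting left `A`- and left `Aᵐᵒᵖ`-actions. -/
structure Bimod (A : Type u) [Ring A] : Type (u + 1) where
  carrier : Type u
  [addCommGroup : AddCommGroup carrier]
  [modLeft : Module A carrier]
  [modRight : Module Aᵐᵒᵖ carrier]
  [smulComm : SMulCommClass A Aᵐᵒᵖ carrier]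

attribute [instance] Bimod.addCommGroup Bimod.modLeft Bimod.modRight Bimod.smulComm

/-- A homomorphism of `A`-`A`-bimodules. -/
def IsBimodHom (A : Type u) [Ring A] {X Y : Type u} [AddCommGroup X] [AddCommGroup Y]
    [Module A X] [Module Aᵐᵒᵖ X] [Module A Y] [Module Aᵐᵒᵖ Y] (g : X → Y) : Prop :=
  (∀ x y : X, g (x + y) = g x + g y) ∧ (∀ (a : A) (x : X), g (a • x) = a • g x) ∧
    (∀ (a : Aᵐᵒᵖ) (x : X), g (a • x) = a • g x)

variable (A : Type u) [Ring A]

/-- `(X, u)` is a model for the `A`-`A`-bimodule `Ae ⊗_{eAe} eA`, where `u` plays the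
role of `e ⊗ e`.  This is expressed by the universal property: bimodule maps out of `X`
correspond exactly to elements `v` of the target with `v = e v e` and
`λ • v = v • λ` for all `λ ∈ eAe`. -/
structure IsAeTensor (e : A) (X : Type u) [AddCommGroup X]
    [Module A X] [Module Aᵐᵒᵖ X] [SMulCommClass A Aᵐᵒᵖ X] (u : X) : Prop where
  smul_e : e • u = u
  op_smul_e : op e • u = u
  balance : ∀ a : A, (e * a * e) • u = op (e * a * e) • u
  universal : ∀ (Y : Bimod.{u} A) (v : Y.carrier), e • v = v → op e • v = v →
    (∀ a : A, (e * a * e) • v = op (e * a * e) • v) →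
      ∃! g : X → Y.carrier, IsBimodHom A g ∧ g u = v

/-- The element `ae ⊗ eb` of (a model `(X, u)` of) `Ae ⊗_{eAe} eA`. -/
def tmk (e : A) {X : Type u} [AddCommGroup X] [Module A X] [Module Aᵐᵒᵖ X]
    (u : X) (a b : A) : X :=
  (a * e) • (op (e * b) • u)

/-- `t : X → Y → Z` is biadditive, `A`-balanced and bilinear over the outer
`A`-`A`-bimodule structures. -/
def IsBalancedBiadd {X Y Z : Type u} [AddCommGroup X] [AddCommGroup Y] [AddCommGroup Z]
    [Module A X] [Module Aᵐᵒᵖ X] [Module A Y] [Module Aᵐᵒᵖ Y] [Module A Z] [Module Aᵐᵒᵖ Z]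
    (t : X → Y → Z) : Prop :=
  (∀ x x' y, t (x + x') y = t x y + t x' y) ∧
  (∀ x y y', t x (y + y') = t x y + t x y') ∧
  (∀ (a : A) x y, t (op a • x) y = t x (a • y)) ∧
  (∀ (a : A) x y, t (a • x) y = a • t x y) ∧
  (∀ (a : A) x y, t x (op a • y) = op a • t x y)

/-- `t : X → Y → T` is a model for the tensor product `X ⊗_A Y` of `A`-`A`-bimodules. -/
structure IsTensorOverA {X Y T : Type u} [AddCommGroup X] [AddCommGroup Y] [AddCommGroup T]
    [Module A X] [Module Aᵐᵒᵖ X] [Module A Y] [Module Aᵐᵒᵖ Y] [Module A T] [Module Aᵐᵒᵖ T]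
    [SMulCommClass A Aᵐᵒᵖ T] (t : X → Y → T) : Prop where
  balanced : IsBalancedBiadd A t
  universal : ∀ (Z : Bimod.{u} A) (s : X → Y → Z.carrier), IsBalancedBiadd A s →
    ∃! g : T → Z.carrier, IsBimodHom A g ∧ ∀ x y, g (t x y) = s x y

/-- The center `Z(eAe)` of the corner ring `eAe`, as a subset of `A`. -/
def centerCorner (e : A) : Set A :=
  {z | z = e * z * e ∧ ∀ a : A, z * (e * a * e) = (e * a * e) * z}

end Paper

namespace Paper

open MulOpposite

-- === auxiliary development ===

section Aux

variable {A : Type u} [Ring A]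

lemma op_op_smul {X : Type u} [AddCommGroup X] [Module Aᵐᵒᵖ X] (a b : A) (x : X) :
    op a • op b • x = op (b * a) • x := by
  rw [smul_smul, ← op_mul]

/-- `A` as a bimodule over itself. -/
def Bimod.self (A : Type u) [Ring A] : Bimod A := { carrier := A }

/-- A sub-bimodule as a bimodule. -/
def Bimod.ofSubmodule {X : Type u} [AddCommGroup X] [Module A X]
    [Module Aᵐᵒᵖ X] [SMulCommClass A Aᵐᵒᵖ X] (S : Submodule A X)
    (hop : ∀ (a : Aᵐᵒᵖ) (x : X), x ∈ S → a • x ∈ S) : Bimod A :=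
  letI : SMul Aᵐᵒᵖ ↥S := ⟨fun a x => ⟨a • x.1, hop a x.1 x.2⟩⟩
  letI : Module Aᵐᵒᵖ ↥S :=
    Function.Injective.module Aᵐᵒᵖ (S.subtype.toAddMonoidHom) Subtype.val_injective
      (fun _ _ => rfl)
  letI : SMulCommClass A Aᵐᵒᵖ ↥S := ⟨fun a b x => Subtype.ext (smul_comm a b x.1)⟩
  { carrier := S }

variable {e : A} {X : Type u} [AddCommGroup X] [Module A X] [Module Aᵐᵒᵖ X]
  [SMulCommClass A Aᵐᵒᵖ X] {u : X}

lemma corner_mul_e (he : IsIdempotentElem e) (a : A) : e * a * e * e = e * a * e := by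
  rw [mul_assoc (e * a) e e, he]

lemma e_mul_corner (he : IsIdempotentElem e) (a : A) : e * (e * a * e) = e * a * e := by
  rw [← mul_assoc, ← mul_assoc, he]

lemma a_smul_tmk (a' a b : A) : a' • tmk A e u a b = tmk A e u (a' * a) b := by
  unfold tmk; rw [smul_smul, ← mul_assoc]

lemma op_smul_tmk (c a b : A) : op c • tmk A e u a b = tmk A e u a (b * c) := by
  unfold tmk
  rw [← smul_comm, op_op_smul, mul_assoc]

lemma tmk_e_e (he : IsIdempotentElem e) (hX : IsAeTensor A e X u) :
    tmk A e u e e = u := by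
  unfold tmk; rw [he, hX.op_smul_e, hX.smul_e]

/-- uniqueness: two bimodule homomorphisms out of `X` agreeing at `u` are equal. -/
lemma hom_eq (hX : IsAeTensor A e X u) (Y : Bimod.{u} A) (g₁ g₂ : X → Y.carrier)
    (h₁ : IsBimodHom A g₁) (h₂ : IsBimodHom A g₂) (hu : g₁ u = g₂ u) : g₁ = g₂ := by
  obtain ⟨g, _, hun⟩ := hX.universal Y (g₁ u)
    (by rw [← h₁.2.1, hX.smul_e])
    (by rw [← h₁.2.2, hX.op_smul_e])
    (fun a => by rw [← h₁.2.1, ← h₁.2.2, hX.balance a])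
  rw [hun g₁ ⟨h₁, rfl⟩, hun g₂ ⟨h₂, hu.symm⟩]

/-- the "multiplication" map `h : X → A`, `ae ⊗ eb ↦ aeb`. -/
lemma exists_h (he : IsIdempotentElem e) (hX : IsAeTensor A e X u) :
    ∃ h : X → A, IsBimodHom A h ∧ h u = e := by
  obtain ⟨h, hh, -⟩ := hX.universal (Bimod.self A) e
    (show e * e = e from he)
    (show e * e = e from he)
    (fun a => show e * a * e * e = e * (e * a * e) by
      rw [corner_mul_e he a, e_mul_corner he a])
  exact ⟨h, hh.1, hh.2⟩

/-- Generation: every element of `X` lies in the span of the `tmk`s. -/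
lemma mem_span (he : IsIdempotentElem e) (hX : IsAeTensor A e X u) (x : X) :
    x ∈ Submodule.span A (Set.range fun p : A × A => tmk A e u p.1 p.2) := by
  set S := Submodule.span A (Set.range fun p : A × A => tmk A e u p.1 p.2) with hS
  have hop : ∀ (a : Aᵐᵒᵖ) (x : X), x ∈ S → a • x ∈ S := by
    intro a x hx
    induction hx using Submodule.span_induction with
    | mem y hy =>
        obtain ⟨⟨p, q⟩, rfl⟩ := hy
        rw [show a = op a.unop from rfl, op_smul_tmk]
        exact Submodule.subset_span ⟨(p, q * a.unop), rfl⟩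
    | zero => rw [smul_zero]; exact S.zero_mem
    | add y z hy hz ihy ihz => rw [smul_add]; exact S.add_mem ihy ihz
    | smul c y hy ihy => rw [← smul_comm c a y]; exact S.smul_mem c ihy
  have hu : u ∈ S := by
    rw [← tmk_e_e he hX]
    exact Submodule.subset_span ⟨(e, e), rfl⟩
  obtain ⟨g, ⟨hg, hgu⟩, -⟩ :=
    hX.universal (Bimod.ofSubmodule S hop) (⟨u, hu⟩ : S)
      (Subtype.ext hX.smul_e) (Subtype.ext hX.op_smul_e)
      (fun a => Subtype.ext (hX.balance a))
  have hval : IsBimodHom A (fun x => (g x).1 : X → X) :=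
    ⟨fun x y => by show (g (x + y)).1 = (g x).1 + (g y).1; rw [hg.1]; rfl,
     fun a x => by show (g (a • x)).1 = a • (g x).1; rw [hg.2.1]; rfl,
     fun a x => by show (g (a • x)).1 = a • (g x).1; rw [hg.2.2]; rfl⟩
  have : (fun x => (g x).1) = (id : X → X) := by
    refine hom_eq hX { carrier := X } _ _ hval ⟨fun _ _ => rfl, fun _ _ => rfl, fun _ _ => rfl⟩ ?_
    show (g u).1 = u
    rw [hgu]
  have hx := congrFun this x
  simp only [id] at hx
  rw [← hx]
  exact (g x).2

lemma e_mul_self (he : IsIdempotentElem e) {z : A} (hz : z = e * z * e) : e * z = z := by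
  rw [hz]; exact e_mul_corner he z

lemma mul_e_self (he : IsIdempotentElem e) {z : A} (hz : z = e * z * e) : z * e = z := by
  rw [hz]; exact corner_mul_e he z

lemma balance_self (hX : IsAeTensor A e X u) {z : A} (hz : z = e * z * e) :
    z • u = op z • u := by
  have h := hX.balance z
  rw [← hz] at h
  exact h

lemma sandwich (he : IsIdempotentElem e) (hX : IsAeTensor A e X u) (x : X) :
    ∀ a : A, ∃ μ : A, μ = e * μ * e ∧ (e * a) • (op e • x) = op μ • u := by
  induction mem_span he hX x using Submodule.span_induction with
  | mem w hw =>
      obtain ⟨⟨p, q⟩, rfl⟩ := hw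
      intro a
      refine ⟨(e * (a * p) * e) * (e * q * e), ?_, ?_⟩
      · have h1 : e * ((e * (a * p) * e) * (e * q * e)) = (e * (a * p) * e) * (e * q * e) := by
          rw [← mul_assoc, e_mul_corner he]
        have h2 : ((e * (a * p) * e) * (e * q * e)) * e = (e * (a * p) * e) * (e * q * e) := by
          rw [mul_assoc, corner_mul_e he]
        rw [h1, h2]
      · rw [op_smul_tmk, a_smul_tmk]
        show ((e * a * p) * e) • (op (e * (q * e)) • u) =
          op ((e * (a * p) * e) * (e * q * e)) • u
        rw [mul_assoc e a p, ← mul_assoc e q e, smul_comm, hX.balance (a * p), op_op_smul]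
  | zero => intro a; exact ⟨0, by simp, by simp⟩
  | add y z hy hz ihy ihz =>
      intro a
      obtain ⟨μ₁, hμ₁, h₁⟩ := ihy a
      obtain ⟨μ₂, hμ₂, h₂⟩ := ihz a
      refine ⟨μ₁ + μ₂, ?_, ?_⟩
      · rw [mul_add, add_mul, ← hμ₁, ← hμ₂]
      · rw [smul_add, smul_add, h₁, h₂, op_add, add_smul]
  | smul c y hy ih =>
      intro a
      obtain ⟨μ, hμ, h⟩ := ih (a * c)
      refine ⟨μ, hμ, ?_⟩
      rw [← smul_comm c (op e) y, smul_smul, mul_assoc, h]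

lemma elem_form (he : IsIdempotentElem e) (hX : IsAeTensor A e X u) (v : X)
    (h1 : e • v = v) (h2 : op e • v = v) : ∃ μ : A, μ = e * μ * e ∧ v = op μ • u := by
  obtain ⟨μ, hμ, hv⟩ := sandwich he hX v e
  rw [h2, he, h1] at hv
  exact ⟨μ, hμ, hv⟩

lemma rho_exists (he : IsIdempotentElem e) (hX : IsAeTensor A e X u) (lam : A)
    (h1 : lam = e * lam * e) (h2 : ∀ a : A, lam * (e * a * e) = (e * a * e) * lam) :
    ∃! g : X → X, IsBimodHom A g ∧ g u = op lam • u := by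
  have c1 : e • (op lam • u) = op lam • u := by rw [smul_comm, hX.smul_e]
  have c2 : op e • (op lam • u) = op lam • u := by rw [op_op_smul, mul_e_self he h1]
  have c3 : ∀ a : A, (e * a * e) • (op lam • u) = op (e * a * e) • (op lam • u) := by
    intro a
    rw [smul_comm, hX.balance a, op_op_smul, op_op_smul, h2]
  exact hX.universal { carrier := X } (op lam • u) c1 c2 c3

lemma g_tmk (he : IsIdempotentElem e) (hX : IsAeTensor A e X u) {lam : A}
    (h1 : lam = e * lam * e) {g : X → X} (hg : IsBimodHom A g)
    (hgu : g u = op lam • u) (a b : A) :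
    g (tmk A e u a b) = tmk A e u (a * e * lam) b := by
  have hle : lam * e = lam := mul_e_self he h1
  have hbal : lam • u = op lam • u := balance_self hX h1
  have key : tmk A e u (a * e * lam) b = (a * e) • (op (e * b) • (op lam • u)) := by
    show ((a * e * lam) * e) • (op (e * b) • u) = _
    rw [mul_assoc (a * e) lam e, hle, mul_smul, smul_comm lam (op (e * b)) u, hbal]
  rw [key]
  show g ((a * e) • (op (e * b) • u)) = _
  rw [hg.2.1, hg.2.2, hgu]

lemma tmk_lam_shift (he : IsIdempotentElem e) (hX : IsAeTensor A e X u) {lam : A}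
    (h1 : lam = e * lam * e) (w d : A) :
    tmk A e u (w * e * lam) (e * d) = tmk A e u w (lam * d) := by
  have hel : e * lam = lam := e_mul_self he h1
  have hle : lam * e = lam := mul_e_self he h1
  have hbal : lam • u = op lam • u := balance_self hX h1
  show ((w * e * lam) * e) • (op (e * (e * d)) • u) = (w * e) • (op (e * (lam * d)) • u)
  rw [mul_assoc (w * e) lam e, hle, ← mul_assoc e e d, he, mul_smul,
    smul_comm lam (op (e * d)) u, hbal, op_op_smul, ← mul_assoc lam e d, hle,
    ← mul_assoc e lam d, hel]

lemma map_zero_of_add {X Y : Type u} [AddCommGroup X] [AddCommGroup Y] {g : X → Y}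
    (hg : ∀ x y : X, g (x + y) = g x + g y) : g 0 = 0 := by
  have h := hg 0 0
  rw [add_zero] at h
  exact (left_eq_add.mp h)

lemma mem_spanT {X Y T : Type u} [AddCommGroup X] [AddCommGroup Y] [AddCommGroup T]
    [Module A X] [Module Aᵐᵒᵖ X] [Module A Y] [Module Aᵐᵒᵖ Y] [Module A T] [Module Aᵐᵒᵖ T]
    [SMulCommClass A Aᵐᵒᵖ T] {t : X → Y → T} (hT : IsTensorOverA A t) (z : T) :
    z ∈ Submodule.span A (Set.range fun p : X × Y => t p.1 p.2) := by
  set S := Submodule.span A (Set.range fun p : X × Y => t p.1 p.2) with hS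
  have hop : ∀ (a : Aᵐᵒᵖ) (w : T), w ∈ S → a • w ∈ S := by
    intro a w hw
    induction hw using Submodule.span_induction with
    | mem y hy =>
        obtain ⟨⟨p, q⟩, rfl⟩ := hy
        rw [show a = op a.unop from rfl, ← hT.balanced.2.2.2.2]
        exact Submodule.subset_span ⟨(p, op a.unop • q), rfl⟩
    | zero => rw [smul_zero]; exact S.zero_mem
    | add y z' hy hz ihy ihz => rw [smul_add]; exact S.add_mem ihy ihz
    | smul c y hy ihy => rw [← smul_comm c a y]; exact S.smul_mem c ihy
  obtain ⟨g, ⟨hg, hgt⟩, -⟩ := hT.universal (Bimod.ofSubmodule S hop)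
    (fun x y => (⟨t x y, Submodule.subset_span ⟨(x, y), rfl⟩⟩ : S))
    ⟨fun x x' y => Subtype.ext (hT.balanced.1 x x' y),
     fun x y y' => Subtype.ext (hT.balanced.2.1 x y y'),
     fun a x y => Subtype.ext (hT.balanced.2.2.1 a x y),
     fun a x y => Subtype.ext (hT.balanced.2.2.2.1 a x y),
     fun a x y => Subtype.ext (hT.balanced.2.2.2.2 a x y)⟩
  obtain ⟨g₀, -, hun⟩ := hT.universal { carrier := T } t hT.balanced
  have h1 := hun (fun z => (g z).1)
    ⟨⟨fun x y => by show (g (x + y)).1 = (g x).1 + (g y).1; rw [hg.1]; rfl,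
      fun a x => by show (g (a • x)).1 = a • (g x).1; rw [hg.2.1]; rfl,
      fun a x => by show (g (a • x)).1 = a • (g x).1; rw [hg.2.2]; rfl⟩,
     fun x y => by show (g (t x y)).1 = t x y; rw [hgt]⟩
  have h2 := hun id ⟨⟨fun _ _ => rfl, fun _ _ => rfl, fun _ _ => rfl⟩, fun _ _ => rfl⟩
  have h4 := congrFun (h1.trans h2.symm) z
  simp only [id] at h4
  rw [← h4]
  exact (g z).2

end Aux

/-- For `Λ = eAe`, the map `ρ : Z(Λ) → End_{A^e}(Ae ⊗_Λ eA)`,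
`λ ↦ ρ_λ : ae ⊗ eb ↦ aeλ ⊗ eb`, is an isomorphism of `k`-algebras; moreover
`ω_λ = ρ_λ ∘ ω_e` for every `λ ∈ Z(Λ)`. -/
theorem rho_is_algebra_isomorphism
    (k : Type u) [CommRing k] (A : Type u) [Ring A] [Algebra k A]
    (e : A) (he : IsIdempotentElem e)
    (X : Type u) [AddCommGroup X] [Module A X] [Module Aᵐᵒᵖ X] [SMulCommClass A Aᵐᵒᵖ X]
    (u : X) (hX : IsAeTensor A e X u)
    (T : Type u) [AddCommGroup T] [Module A T] [Module Aᵐᵒᵖ T] [SMulCommClass A Aᵐᵒᵖ T]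
    (t : X → X → T) (hT : IsTensorOverA A t) :
    ∃ ρ : centerCorner A e → {g : X → X // IsBimodHom A g},
      -- `ρ_λ` is given on generators by `ae ⊗ eb ↦ aeλ ⊗ eb`
      (∀ (lam : centerCorner A e) (a b : A),
        (ρ lam).1 (tmk A e u a b) = tmk A e u (a * e * lam.1) b) ∧
      -- `ρ` is a bijection onto the set of bimodule endomorphisms
      Function.Bijective ρ ∧
      -- `ρ` is additive
      (∀ l m s : centerCorner A e, s.1 = l.1 + m.1 →
        ∀ x : X, (ρ s).1 x = (ρ l).1 x + (ρ m).1 x) ∧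
      -- `ρ` is multiplicative
      (∀ l m s : centerCorner A e, s.1 = l.1 * m.1 →
        ∀ x : X, (ρ s).1 x = (ρ l).1 ((ρ m).1 x)) ∧
      -- `ρ` sends the identity `e` of `Z(eAe)` to the identity endomorphism
      (∀ s : centerCorner A e, s.1 = e → ∀ x : X, (ρ s).1 x = x) ∧
      -- `ρ` is `k`-linear
      (∀ (c : k) (l s : centerCorner A e), s.1 = algebraMap k A c * l.1 →
        ∀ x : X, (ρ s).1 x = algebraMap k A c • (ρ l).1 x) ∧
      -- moreover, `ω_λ = ρ_λ ∘ ω_e`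
      (∀ (lam : centerCorner A e) (ωe ωl : T → X), IsBimodHom A ωe → IsBimodHom A ωl →
        (∀ b c b' c' : A, ωe (t (tmk A e u b c) (tmk A e u b' c')) =
          tmk A e u (b * e * c * b') (e * c')) →
        (∀ b c b' c' : A, ωl (t (tmk A e u b c) (tmk A e u b' c')) =
          tmk A e u (b * e * c * b') (lam.1 * c')) →
        ∀ x : T, ωl x = (ρ lam).1 (ωe x)) := by

  classical
  obtain ⟨h, hh, hhu⟩ := exists_h he hX
  have hhop : ∀ a : A, h (op a • u) = e * a := fun a => by
    rw [hh.2.2, hhu, op_smul_eq_mul]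
  have hmem1 : ∀ lam : centerCorner A e, lam.1 = e * lam.1 * e := fun lam => lam.2.1
  have hmem2 : ∀ lam : centerCorner A e, ∀ a : A,
      lam.1 * (e * a * e) = (e * a * e) * lam.1 := fun lam => lam.2.2
  choose g hghom hgu using fun lam : centerCorner A e =>
    (rho_exists he hX lam.1 (hmem1 lam) (hmem2 lam)).exists
  have genf : ∀ (lam : centerCorner A e) (a b : A),
      g lam (tmk A e u a b) = tmk A e u (a * e * lam.1) b := fun lam =>
    g_tmk he hX (hmem1 lam) (hghom lam) (hgu lam)
  refine ⟨fun lam => ⟨g lam, hghom lam⟩, ?_, ⟨?_, ?_⟩, ?_, ?_, ?_, ?_, ?_⟩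
  · exact genf
  · -- injective
    intro l m hlm
    have h1 : g l u = g m u := congrFun (congrArg Subtype.val hlm) u
    rw [hgu l, hgu m] at h1
    have h2 := congrArg h h1
    rw [hhop, hhop, e_mul_self he (hmem1 l), e_mul_self he (hmem1 m)] at h2
    exact Subtype.ext h2
  · -- surjective
    rintro ⟨f, hf⟩
    have hv1 : e • f u = f u := by rw [← hf.2.1, hX.smul_e]
    have hv2 : op e • f u = f u := by rw [← hf.2.2, hX.op_smul_e]
    obtain ⟨μ, hμ, hvμ⟩ := elem_form he hX (f u) hv1 hv2
    have hcent : ∀ a : A, μ * (e * a * e) = (e * a * e) * μ := by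
      intro a
      have hbalv : (e * a * e) • f u = op (e * a * e) • f u := by
        rw [← hf.2.1, ← hf.2.2, hX.balance a]
      rw [hvμ, smul_comm, hX.balance a, op_op_smul, op_op_smul] at hbalv
      have h3 := congrArg h hbalv
      rw [hhop, hhop, ← mul_assoc, e_mul_corner he, ← mul_assoc,
        e_mul_self he hμ] at h3
      exact h3.symm
    refine ⟨⟨μ, hμ, hcent⟩, ?_⟩
    apply Subtype.ext
    show g ⟨μ, hμ, hcent⟩ = f
    refine hom_eq hX { carrier := X } _ _ (hghom _) hf ?_
    rw [hgu]
    exact hvμ.symm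
  · -- additive
    intro l m s hs x
    have hfun : g s = fun x => g l x + g m x := by
      refine hom_eq hX { carrier := X } _ _ (hghom s)
        ⟨fun x y => by
          show g l (x + y) + g m (x + y) = (g l x + g m x) + (g l y + g m y)
          rw [(hghom l).1, (hghom m).1]; exact add_add_add_comm _ _ _ _,
         fun a x => by
          show g l (a • x) + g m (a • x) = a • (g l x + g m x)
          rw [(hghom l).2.1, (hghom m).2.1, smul_add],
         fun a x => by
          show g l (a • x) + g m (a • x) = a • (g l x + g m x)
          rw [(hghom l).2.2, (hghom m).2.2, smul_add]⟩ ?_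
      show g s u = g l u + g m u
      rw [hgu s, hgu l, hgu m, hs, op_add, add_smul]
    exact congrFun hfun x
  · -- multiplicative
    intro l m s hs x
    have hfun : g s = fun x => g l (g m x) := by
      refine hom_eq hX { carrier := X } _ _ (hghom s)
        ⟨fun x y => by
          show g l (g m (x + y)) = g l (g m x) + g l (g m y)
          rw [(hghom m).1, (hghom l).1],
         fun a x => by
          show g l (g m (a • x)) = a • g l (g m x)
          rw [(hghom m).2.1, (hghom l).2.1],
         fun a x => by
          show g l (g m (a • x)) = a • g l (g m x)
          rw [(hghom m).2.2, (hghom l).2.2]⟩ ?_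
      show g s u = g l (g m u)
      rw [hgu s, hgu m, (hghom l).2.2, hgu l, op_op_smul, ← hs]
    exact congrFun hfun x
  · -- identity
    intro s hs x
    have hfun : g s = id := by
      refine hom_eq hX { carrier := X } _ _ (hghom s)
        ⟨fun _ _ => rfl, fun _ _ => rfl, fun _ _ => rfl⟩ ?_
      show g s u = u
      rw [hgu s, hs, hX.op_smul_e]
    exact congrFun hfun x
  · -- k-linearity
    intro c l s hs x
    have hfun : g s = fun x => algebraMap k A c • g l x := by
      refine hom_eq hX { carrier := X } _ _ (hghom s)
        ⟨fun x y => by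
          show algebraMap k A c • g l (x + y) =
            algebraMap k A c • g l x + algebraMap k A c • g l y
          rw [(hghom l).1, smul_add],
         fun a x => by
          show algebraMap k A c • g l (a • x) = a • (algebraMap k A c • g l x)
          rw [(hghom l).2.1, smul_smul, smul_smul, Algebra.commutes],
         fun a x => by
          show algebraMap k A c • g l (a • x) = a • (algebraMap k A c • g l x)
          rw [(hghom l).2.2]
          exact smul_comm _ a _⟩ ?_
      have h1s : algebraMap k A c * l.1 = e * (algebraMap k A c * l.1) * e := by
        have := hmem1 s
        rw [hs] at this
        exact this
      show g s u = algebraMap k A c • g l u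
      rw [hgu s, hgu l, hs, ← balance_self hX h1s, mul_smul, balance_self hX (hmem1 l)]
    exact congrFun hfun x
  · -- omega_lam = rho_lam ∘ omega_e
    intro lam ωe ωl hωe hωl hge hgl x
    have keygen : ∀ p q p' q' : A,
        ωl (t (tmk A e u p q) (tmk A e u p' q')) =
          g lam (ωe (t (tmk A e u p q) (tmk A e u p' q'))) := by
      intro p q p' q'
      rw [hgl, hge, genf]
      exact (tmk_lam_shift he hX (hmem1 lam) (p * e * q * p') q').symm
    have key1 : ∀ (x : X) (p' q' : A),
        ωl (t x (tmk A e u p' q')) = g lam (ωe (t x (tmk A e u p' q'))) := by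
      intro x
      induction mem_span he hX x using Submodule.span_induction with
      | mem w hw =>
          obtain ⟨⟨p, q⟩, rfl⟩ := hw
          exact fun p' q' => keygen p q p' q'
      | zero =>
          intro p' q'
          have ht0 : t 0 (tmk A e u p' q') = 0 :=
            map_zero_of_add (g := fun x => t x (tmk A e u p' q'))
              (fun x y => hT.balanced.1 x y _)
          rw [ht0, map_zero_of_add hωl.1, map_zero_of_add hωe.1,
            map_zero_of_add (hghom lam).1]
      | add y z hy hz ihy ihz =>
          intro p' q'
          rw [hT.balanced.1, hωl.1, hωe.1, (hghom lam).1, ihy, ihz]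
      | smul c y hy ihy =>
          intro p' q'
          rw [hT.balanced.2.2.2.1, hωl.2.1, hωe.2.1, (hghom lam).2.1, ihy]
    have key : ∀ (y x : X), ωl (t x y) = g lam (ωe (t x y)) := by
      intro y
      induction mem_span he hX y using Submodule.span_induction with
      | mem w hw =>
          obtain ⟨⟨p, q⟩, rfl⟩ := hw
          exact fun x => key1 x p q
      | zero =>
          intro x
          have ht0 : t x 0 = 0 :=
            map_zero_of_add (g := fun y => t x y) (fun y y' => hT.balanced.2.1 x y y')
          rw [ht0, map_zero_of_add hωl.1, map_zero_of_add hωe.1,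
            map_zero_of_add (hghom lam).1]
      | add y z hy hz ihy ihz =>
          intro x
          rw [hT.balanced.2.1, hωl.1, hωe.1, (hghom lam).1, ihy, ihz]
      | smul c y hy ihy =>
          intro x
          rw [← hT.balanced.2.2.1 c x y]
          exact ihy (op c • x)
    show ωl x = g lam (ωe x)
    induction mem_spanT hT x using Submodule.span_induction with
    | mem w hw =>
        obtain ⟨⟨p, q⟩, rfl⟩ := hw
        exact key q p
    | zero =>
        rw [map_zero_of_add hωl.1, map_zero_of_add hωe.1, map_zero_of_add (hghom lam).1]
    | add y z hy hz ihy ihz => rw [hωl.1, hωe.1, (hghom lam).1, ihy, ihz]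
    | smul c y hy ihy => rw [hωl.2.1, hωe.2.1, (hghom lam).2.1, ihy]

end Paper
end

section
/- Let k be a commutative ring, A a k-algebra, e an idempotent of A, and Λ := eAe. For λ1, λ2 ∈ Z(Λ), the mirror-reflective algebras R(A,e,λ1) and R(A,e,λ2) are isomorphic as idealized extensions of A by Ae ⊗_Λ eA if and only if λ1 and λ2 lie in the same coset of the group Z(Λ)^× of units of Z(Λ), i.e., λ2 = λ1·u for some invertible element u ∈ Z(Λ). -/
/-!
Common setup: bimodules over a ring `A`, a universal-property description of the
`A`-`A`-bimodule `Ae ⊗_{eAe} eA` (with distinguished element `u = e ⊗ e`),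
a universal-property description of tensor products of bimodules over `A`,
and the center of the corner ring `eAe`.
-/

open MulOpposite

universe u

namespace Paper

open MulOpposite

variable (k : Type u) (A : Type u) [CommRing k] [Ring A] [Algebra k A]

/-- The data exhibiting a `k`-algebra `R` as the mirror-reflective algebra `R(A, e, lam)`,
i.e. as the idealized extension of `A` by `X = Ae ⊗_{eAe} eA` whose multiplication on the
ideal `X` is given by `ω_lam`. -/
structure MirrorData (e lam : A) (R : Type u) [Ring R] [Algebra k R] : Type (u + 1) where
  X : Type u
  [addX : AddCommGroup X]
  [modL : Module A X]
  [modR : Module Aᵐᵒᵖ X]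
  [scc : SMulCommClass A Aᵐᵒᵖ X]
  u : X
  tensor : IsAeTensor A e X u
  emb : A →ₐ[k] R
  embX : X →+ R
  bij : Function.Bijective (fun p : A × X => emb p.1 + embX p.2)
  left_compat : ∀ (a : A) (x : X), emb a * embX x = embX (a • x)
  right_compat : ∀ (a : A) (x : X), embX x * emb a = embX (op a • x)
  mul_X : ∀ b c b' c' : A,
    embX (tmk A e u b c) * embX (tmk A e u b' c') =
      embX (tmk A e u (b * e * c * b') (lam * c'))

/-!
An isomorphism of idealized extensions restricts to a bimodule isomorphism `ψ` between the two
copies of `Ae ⊗_Λ eA`. By the universal property `ψ` is determined by `ψ(e ⊗ e)`, which has to be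
`z (e ⊗ e)` with `z ∈ Z(Λ)`, and `ψ` is invertible exactly when `z` is a unit of `Z(Λ)`. Since
`(e ⊗ e)² = λ (e ⊗ e)` in `R(A, e, λ)`, applying the isomorphism gives `z² λ₂ = λ₁ z`, that is
`λ₂ = λ₁ z⁻¹`. Conversely, when `z λ₂ = λ₁` for a unit `z`, the map `a + x ↦ a + ψ x` with
`ψ(e ⊗ e) = z (e ⊗ e)` is multiplicative: `Ae ⊗_Λ eA` is additively generated by the `ae ⊗ eb`,
on which this is a direct computation.
-/

section BimodHom

variable {A} {X Y Z : Type u} [AddCommGroup X] [AddCommGroup Y] [AddCommGroup Z]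
  [Module A X] [Module Aᵐᵒᵖ X] [Module A Y] [Module Aᵐᵒᵖ Y] [Module A Z] [Module Aᵐᵒᵖ Z]

lemma isBimodHom_id : IsBimodHom A (id : X → X) :=
  ⟨fun _ _ => rfl, fun _ _ => rfl, fun _ _ => rfl⟩

lemma IsBimodHom.comp {g : Y → Z} {f : X → Y} (hg : IsBimodHom A g) (hf : IsBimodHom A f) :
    IsBimodHom A (g ∘ f) :=
  ⟨fun x y => by simp only [Function.comp_apply, hf.1, hg.1],
    fun a x => by simp only [Function.comp_apply, hf.2.1, hg.2.1],
    fun a x => by simp only [Function.comp_apply, hf.2.2, hg.2.2]⟩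

end BimodHom

section CenterCorner

variable {A} {e : A}

lemma idem_mem_centerCorner (he : IsIdempotentElem e) : e ∈ centerCorner A e :=
  ⟨by rw [he.eq, he.eq], fun a => by simp only [← mul_assoc, he.eq]; rw [mul_assoc _ e e, he.eq]⟩

lemma e_mul_of_mem_centerCorner (he : IsIdempotentElem e) {z : A} (hz : z ∈ centerCorner A e) :
    e * z = z := by
  rw [hz.1, ← mul_assoc, ← mul_assoc, he.eq]

lemma mul_e_of_mem_centerCorner (he : IsIdempotentElem e) {z : A} (hz : z ∈ centerCorner A e) :
    z * e = z := by
  rw [hz.1, mul_assoc, he.eq]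

lemma commute_of_mem_centerCorner {z w : A} (hz : z ∈ centerCorner A e)
    (hw : w ∈ centerCorner A e) : Commute z w := by
  rw [Commute, SemiconjBy, hw.1, hz.2 w]

lemma mul_mul_e_mul_e_of_mem_centerCorner (he : IsIdempotentElem e) {v : A}
    (hv : v ∈ centerCorner A e) (x y : A) : x * v * e * y * e = x * e * y * v := by
  calc x * v * e * y * e = x * (v * (e * y * e)) := by simp only [mul_assoc]
    _ = x * ((e * y * e) * v) := by rw [hv.2 y]
    _ = x * e * y * v := by simp only [mul_assoc, e_mul_of_mem_centerCorner he hv]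

lemma eq_mul_of_mul_mul_mul_eq (he : IsIdempotentElem e) {z z' lam1 lam2 : A}
    (hz : z ∈ centerCorner A e) (hz' : z' ∈ centerCorner A e) (h1 : lam1 ∈ centerCorner A e)
    (h2 : lam2 ∈ centerCorner A e) (hz'z : z' * z = e) (h : z * z * lam2 = lam1 * z) :
    lam2 = lam1 * z' :=
  calc lam2 = z' * (z' * z) * z * lam2 := by
        rw [hz'z, mul_e_of_mem_centerCorner he hz', hz'z, e_mul_of_mem_centerCorner he h2]
    _ = z' * z' * (z * z * lam2) := by simp only [mul_assoc]
    _ = z' * z' * (z * lam1) := by rw [h, (commute_of_mem_centerCorner h1 hz).eq]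
    _ = lam1 * z' := by
        rw [mul_assoc z', ← mul_assoc z' z, hz'z, e_mul_of_mem_centerCorner he h1,
          (commute_of_mem_centerCorner hz' h1).eq]

end CenterCorner

section CornerBalanced

variable {A} {Y Z : Type u} [AddCommGroup Y] [Module A Y] [Module Aᵐᵒᵖ Y]
  [AddCommGroup Z] [Module A Z] [Module Aᵐᵒᵖ Z]

/-- The elements to which `e ⊗ e` can be sent by a bimodule map out of `Ae ⊗_{eAe} eA`. -/
def IsCornerBalanced (e : A) (v : Y) : Prop :=
  e • v = v ∧ op e • v = v ∧ ∀ a : A, (e * a * e) • v = op (e * a * e) • v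

variable {e : A}

lemma IsCornerBalanced.map {g : Y → Z} (hg : IsBimodHom A g) {v : Y}
    (hv : IsCornerBalanced e v) : IsCornerBalanced e (g v) :=
  ⟨by rw [← hg.2.1, hv.1], by rw [← hg.2.2, hv.2.1],
    fun a => by rw [← hg.2.1, ← hg.2.2, hv.2.2]⟩

lemma IsCornerBalanced.smul [SMulCommClass A Aᵐᵒᵖ Y] (he : IsIdempotentElem e) {v : Y}
    (hv : IsCornerBalanced e v) {z : A} (hz : z ∈ centerCorner A e) :
    IsCornerBalanced e (z • v) := by
  refine ⟨by rw [smul_smul, e_mul_of_mem_centerCorner he hz], ?_, fun a => ?_⟩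
  · rw [← smul_comm, hv.2.1]
  · rw [smul_smul, ← hz.2 a, mul_smul, hv.2.2, smul_comm]

lemma IsBimodHom.map_smul_op_smul [SMulCommClass A Aᵐᵒᵖ Z] {ψ : Y → Z} (hψ : IsBimodHom A ψ)
    {y : Y} {z : Z} {v : A} (hψy : ψ y = v • z) (a b : A) :
    ψ (a • op b • y) = (a * v) • op b • z := by
  rw [hψ.2.1, hψ.2.2, hψy, ← smul_comm v (op b), mul_smul]

end CornerBalanced

section Tensor

variable {A} {e : A} {X Y : Type u} [AddCommGroup X] [Module A X] [Module Aᵐᵒᵖ X]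
  [SMulCommClass A Aᵐᵒᵖ X] [AddCommGroup Y] [Module A Y] [Module Aᵐᵒᵖ Y]
  [SMulCommClass A Aᵐᵒᵖ Y] {u : X} {u' : Y}

namespace IsAeTensor

lemma isCornerBalanced (hu : IsAeTensor A e X u) : IsCornerBalanced e u :=
  ⟨hu.smul_e, hu.op_smul_e, hu.balance⟩

lemma exists_lift (hu : IsAeTensor A e X u) {v : Y} (hv : IsCornerBalanced e v) :
    ∃ g : X → Y, IsBimodHom A g ∧ g u = v :=
  (hu.universal ⟨Y⟩ v hv.1 hv.2.1 hv.2.2).exists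

lemma hom_ext (hu : IsAeTensor A e X u) {f g : X → Y} (hf : IsBimodHom A f)
    (hg : IsBimodHom A g) (h : f u = g u) : f = g := by
  have hv := hu.isCornerBalanced.map hf
  exact (hu.universal ⟨Y⟩ (f u) hv.1 hv.2.1 hv.2.2).unique ⟨hf, rfl⟩ ⟨hg, h.symm⟩

lemma closure_eq_top (hu : IsAeTensor A e X u) :
    AddSubgroup.closure (Set.range fun p : A × A => p.1 • op p.2 • u) = ⊤ := by
  set T := AddSubgroup.closure (Set.range fun p : A × A => p.1 • op p.2 • u)
  have stable : ∀ f : X →+ X, (∀ a b : A, ∃ c d : A, f (a • op b • u) = c • op d • u) →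
      ∀ x ∈ T, f x ∈ T := by
    intro f hf x hx
    have hle : T.map f ≤ T := by
      rw [AddMonoidHom.map_closure]
      refine AddSubgroup.closure_mono ?_
      rintro _ ⟨_, ⟨⟨a, b⟩, rfl⟩, rfl⟩
      obtain ⟨c, d, hcd⟩ := hf a b
      exact ⟨(c, d), hcd.symm⟩
    exact hle ⟨x, hx, rfl⟩
  have hsmul (a : A) : ∀ x ∈ T, a • x ∈ T :=
    stable (DistribSMul.toAddMonoidHom X a) fun a' b => ⟨a * a', b, by simp [mul_smul]⟩
  have hop (b : Aᵐᵒᵖ) : ∀ x ∈ T, b • x ∈ T :=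
    stable (DistribSMul.toAddMonoidHom X b) fun a b' => ⟨a, b' * b.unop, by
      simp only [DistribSMul.toAddMonoidHom_apply, op_mul, op_unop, mul_smul]
      exact (smul_comm a b _).symm⟩
  let _ : SMul A T := ⟨fun a x => ⟨a • x.1, hsmul a x.1 x.2⟩⟩
  let _ : SMul Aᵐᵒᵖ T := ⟨fun b x => ⟨b • x.1, hop b x.1 x.2⟩⟩
  let _ : Module A T :=
    Function.Injective.module A T.subtype Subtype.coe_injective fun _ _ => rfl
  let _ : Module Aᵐᵒᵖ T :=
    Function.Injective.module Aᵐᵒᵖ T.subtype Subtype.coe_injective fun _ _ => rfl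
  have _ : SMulCommClass A Aᵐᵒᵖ T := ⟨fun a b x => Subtype.ext (smul_comm a b x.1)⟩
  have hu_mem : u ∈ T :=
    AddSubgroup.subset_closure ⟨(e, e), show e • op e • u = u by rw [hu.op_smul_e, hu.smul_e]⟩
  -- `T` is a sub-bimodule containing `u`, so the lift of `u` into `T` is a section of `T ⊆ X`
  obtain ⟨g, hg, hgu⟩ := hu.exists_lift (Y := T) (v := ⟨u, hu_mem⟩)
    ⟨Subtype.ext hu.smul_e, Subtype.ext hu.op_smul_e, fun a => Subtype.ext (hu.balance a)⟩
  have hval : (Subtype.val ∘ g : X → X) = id :=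
    hu.hom_ext (IsBimodHom.comp ⟨fun _ _ => rfl, fun _ _ => rfl, fun _ _ => rfl⟩ hg)
      isBimodHom_id (congrArg Subtype.val hgu)
  refine eq_top_iff.2 fun x _ => ?_
  have hx : (g x : X) = x := congrFun hval x
  exact hx ▸ (g x).2

lemma addMonoidHom_ext (hu : IsAeTensor A e X u) {M : Type*} [AddMonoid M] {f g : X →+ M}
    (h : ∀ a b : A, f (a • op b • u) = g (a • op b • u)) : f = g :=
  AddMonoidHom.eq_of_eqOn_dense hu.closure_eq_top (by rintro _ ⟨⟨a, b⟩, rfl⟩; exact h a b)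

lemma addMonoidHom_ext₂ (hu : IsAeTensor A e X u) {M : Type*} [AddCommMonoid M]
    {f g : X →+ X →+ M}
    (h : ∀ a b a' b' : A, f (a • op b • u) (a' • op b' • u) = g (a • op b • u) (a' • op b' • u)) :
    f = g :=
  hu.addMonoidHom_ext fun a b => hu.addMonoidHom_ext (h a b)

lemma tmk_eq (hu : IsAeTensor A e X u) (a b : A) : tmk A e u a b = a • op b • u := by
  rw [tmk, mul_smul, op_mul, mul_smul, hu.op_smul_e, smul_comm e, hu.smul_e]

lemma op_smul_eq_op_e_mul_smul (hu : IsAeTensor A e X u) (b : A) : op b • u = op (e * b) • u := by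
  rw [op_mul, mul_smul, hu.op_smul_e]

lemma mul_e_smul (hu : IsAeTensor A e X u) (x c : A) : (x * e) • op c • u = x • op c • u := by
  rw [mul_smul, smul_comm e, hu.smul_e]

lemma op_smul_eq_smul (hu : IsAeTensor A e X u) {z : A} (hz : z ∈ centerCorner A e) :
    op z • u = z • u := by
  rw [hz.1, hu.balance]

lemma mul_smul_op_smul (hu : IsAeTensor A e X u) {z : A} (hz : z ∈ centerCorner A e) (x c : A) :
    (x * z) • op c • u = x • op (z * c) • u := by
  rw [mul_smul, smul_comm z, ← hu.op_smul_eq_smul hz, smul_smul, ← op_mul]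

lemma exists_mulMap (hu : IsAeTensor A e X u) (he : IsIdempotentElem e) :
    ∃ μ : X → A, IsBimodHom A μ ∧ μ u = e :=
  hu.exists_lift (Y := A) ⟨he.eq, he.eq, fun a => ((idem_mem_centerCorner he).2 a).symm⟩

lemma eq_of_smul_eq (hu : IsAeTensor A e X u) (he : IsIdempotentElem e) {z w : A}
    (hz : z * e = z) (hw : w * e = w) (h : z • u = w • u) : z = w := by
  obtain ⟨μ, hμ, hμu⟩ := hu.exists_mulMap he
  have := congrArg μ h
  rwa [hμ.2.1, hμ.2.1, hμu, smul_eq_mul, smul_eq_mul, hz, hw] at this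

lemma exists_eq_smul_of_isCornerBalanced (hu : IsAeTensor A e X u) (he : IsIdempotentElem e)
    {v : X} (hv : IsCornerBalanced e v) : ∃ z ∈ centerCorner A e, v = z • u := by
  obtain ⟨μ, hμ, hμu⟩ := hu.exists_mulMap he
  -- `μ` identifies `e X e` with `eAe`
  have hcorner (x : X) : e • op e • x = (e * μ x * e) • u := by
    let f : X →+ X := (DistribSMul.toAddMonoidHom X e).comp (DistribSMul.toAddMonoidHom X (op e))
    let g : X →+ X := ((smulAddHom A X).flip u).comp
      ((AddMonoidHom.mulRight e).comp ((AddMonoidHom.mulLeft e).comp (AddMonoidHom.mk' μ hμ.1)))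
    refine DFunLike.congr_fun (hu.addMonoidHom_ext (f := f) (g := g) fun a b => ?_) x
    simp only [f, g, AddMonoidHom.comp_apply, DistribSMul.toAddMonoidHom_apply,
      AddMonoidHom.mk'_apply, AddMonoidHom.coe_mulLeft, AddMonoidHom.coe_mulRight,
      AddMonoidHom.flip_apply, smulAddHom_apply, hμ.2.1, hμ.2.2, hμu, smul_eq_mul,
      op_smul_eq_mul]
    rw [← smul_comm a (op e), hu.op_smul_eq_op_e_mul_smul b, ← mul_smul (op e), ← op_mul,
      ← hu.balance, smul_smul, smul_smul]
    simp only [mul_assoc]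
  have hvz : v = (e * μ v * e) • u := by rw [← hcorner, hv.2.1, hv.1]
  have hz : μ v = e * μ v * e := by
    conv_lhs => rw [hvz, hμ.2.1, hμu, smul_eq_mul, mul_assoc, he.eq]
  refine ⟨μ v, ⟨hz, fun a => ?_⟩, hz ▸ hvz⟩
  have := congrArg μ (hv.2.2 a)
  rwa [hμ.2.1, hμ.2.2, smul_eq_mul, op_smul_eq_mul, eq_comm] at this

omit [SMulCommClass A Aᵐᵒᵖ Y] in
lemma mul_eq_of_leftInverse (hu : IsAeTensor A e X u) (he : IsIdempotentElem e)
    {ψ : X → Y} {ψ' : Y → X} (hψ' : IsBimodHom A ψ') {z z' : A} (hz' : z' ∈ centerCorner A e)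
    (hψu : ψ u = z • u') (hψ'u : ψ' u' = z' • u) (h : ψ' (ψ u) = u) : z * z' = e := by
  refine hu.eq_of_smul_eq he (by rw [mul_assoc, mul_e_of_mem_centerCorner he hz']) he.eq ?_
  rw [mul_smul, ← hψ'u, ← hψ'.2.1, ← hψu, h, hu.smul_e]

lemma exists_unit_of_isBimodHom_of_inverse (hu : IsAeTensor A e X u) (hu' : IsAeTensor A e Y u')
    (he : IsIdempotentElem e) {ψ : X → Y} {ψ' : Y → X} (hψ : IsBimodHom A ψ)
    (hψ' : IsBimodHom A ψ') (hleft : Function.LeftInverse ψ' ψ)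
    (hright : Function.RightInverse ψ' ψ) :
    ∃ z ∈ centerCorner A e, ψ u = z • u' ∧
      ∃ z' ∈ centerCorner A e, z * z' = e ∧ z' * z = e := by
  obtain ⟨z, hz, hψu⟩ := hu'.exists_eq_smul_of_isCornerBalanced he (hu.isCornerBalanced.map hψ)
  obtain ⟨z', hz', hψ'u⟩ :=
    hu.exists_eq_smul_of_isCornerBalanced he (hu'.isCornerBalanced.map hψ')
  exact ⟨z, hz, hψu, z', hz', hu.mul_eq_of_leftInverse he hψ' hz' hψu hψ'u (hleft u),
    hu'.mul_eq_of_leftInverse he hψ hz hψ'u hψu (hright u')⟩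

lemma exists_addEquiv_of_unit (hu : IsAeTensor A e X u) (hu' : IsAeTensor A e Y u')
    (he : IsIdempotentElem e) {v w : A} (hv : v ∈ centerCorner A e) (hw : w ∈ centerCorner A e)
    (hvw : v * w = e) (hwv : w * v = e) :
    ∃ ψ : X ≃+ Y, IsBimodHom A ψ ∧ ψ u = v • u' := by
  obtain ⟨ψ, hψ, hψu⟩ := hu.exists_lift (hu'.isCornerBalanced.smul he hv)
  obtain ⟨ψ', hψ', hψ'u⟩ := hu'.exists_lift (hu.isCornerBalanced.smul he hw)
  have hleft : ψ' ∘ ψ = id := hu.hom_ext (hψ'.comp hψ) isBimodHom_id (by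
    rw [Function.comp_apply, hψu, hψ'.2.1, hψ'u, smul_smul, hvw, hu.smul_e, id])
  have hright : ψ ∘ ψ' = id := hu'.hom_ext (hψ.comp hψ') isBimodHom_id (by
    rw [Function.comp_apply, hψ'u, hψ.2.1, hψu, smul_smul, hwv, hu'.smul_e, id])
  let ψe : X ≃+ Y :=
    { toFun := ψ
      invFun := ψ'
      left_inv := congrFun hleft
      right_inv := congrFun hright
      map_add' := hψ.1 }
  exact ⟨ψe, hψ, hψu⟩

end IsAeTensor

end Tensor

section Mirror

variable {k A} {e : A}

attribute [local instance] MirrorData.addX MirrorData.modL MirrorData.modR MirrorData.scc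

namespace MirrorData

section Single

variable {lam : A} {R : Type u} [Ring R] [Algebra k R] (D : MirrorData k A e lam R)

noncomputable def decomp : A × D.X ≃+ R :=
  AddEquiv.ofBijective (D.emb.toRingHom.toAddMonoidHom.coprod D.embX) D.bij

lemma decomp_apply (p : A × D.X) : D.decomp p = D.emb p.1 + D.embX p.2 := rfl

lemma embX_injective : Function.Injective D.embX := fun x y h =>
  congrArg Prod.snd (D.decomp.injective (a₁ := (0, x)) (a₂ := (0, y))
    (by rw [decomp_apply, decomp_apply, h]))

lemma emb_add_embX_mul (a a' : A) (x x' : D.X) :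
    (D.emb a + D.embX x) * (D.emb a' + D.embX x') =
      D.emb (a * a') + D.embX (a • x' + op a' • x) + D.embX x * D.embX x' := by
  rw [add_mul, mul_add, mul_add, ← map_mul, D.left_compat, D.right_compat, map_add]
  abel

lemma embX_smul_op_smul_mul (a b a' b' : A) :
    D.embX (a • op b • D.u) * D.embX (a' • op b' • D.u) =
      D.embX ((a * e * b * a') • op (lam * b') • D.u) := by
  simpa only [D.tensor.tmk_eq] using D.mul_X a b a' b'

lemma embX_smul_mul_embX_smul (he : IsIdempotentElem e) (hlam : lam ∈ centerCorner A e)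
    {z w : A} (hz : z ∈ centerCorner A e) :
    D.embX (z • D.u) * D.embX (w • D.u) = D.embX ((z * w * lam) • D.u) := by
  have h := D.embX_smul_op_smul_mul z e w e
  rw [D.tensor.op_smul_e, mul_e_of_mem_centerCorner he hz, mul_e_of_mem_centerCorner he hz,
    mul_e_of_mem_centerCorner he hlam, D.tensor.op_smul_eq_smul hlam, smul_smul] at h
  exact h

end Single

section Pair

variable {lam1 lam2 : A} {R1 R2 : Type u} [Ring R1] [Algebra k R1] [Ring R2] [Algebra k R2]
  (D1 : MirrorData k A e lam1 R1) (D2 : MirrorData k A e lam2 R2)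

lemma exists_isBimodHom_of_ringHom {F : Type*} [FunLike F R1 R2] [RingHomClass F R1 R2] (φ : F)
    (hA : ∀ a : A, φ (D1.emb a) = D2.emb a) (hX : ∀ x : D1.X, φ (D1.embX x) ∈ Set.range D2.embX) :
    ∃ ψ : D1.X → D2.X, IsBimodHom A ψ ∧ ∀ x, D2.embX (ψ x) = φ (D1.embX x) := by
  choose ψ hψ using hX
  refine ⟨ψ, ⟨fun x y => D2.embX_injective ?_, fun a x => D2.embX_injective ?_,
    fun b x => D2.embX_injective ?_⟩, hψ⟩
  · rw [hψ, map_add, map_add, map_add, hψ, hψ]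
  · rw [hψ, ← D1.left_compat, map_mul, hA, ← hψ, D2.left_compat]
  · rw [hψ, ← op_unop b, ← D1.right_compat, map_mul, hA, ← hψ, D2.right_compat]

noncomputable def transfer (ψ : D1.X ≃+ D2.X) : R1 ≃+ R2 :=
  D1.decomp.symm.trans (((AddEquiv.refl A).prodCongr ψ).trans D2.decomp)

lemma transfer_emb_add_embX (ψ : D1.X ≃+ D2.X) (a : A) (x : D1.X) :
    transfer D1 D2 ψ (D1.emb a + D1.embX x) = D2.emb a + D2.embX (ψ x) := by
  rw [← D1.decomp_apply (a, x), transfer, AddEquiv.trans_apply, AddEquiv.symm_apply_apply]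
  rfl

lemma transfer_emb (ψ : D1.X ≃+ D2.X) (a : A) : transfer D1 D2 ψ (D1.emb a) = D2.emb a := by
  simpa using transfer_emb_add_embX D1 D2 ψ a 0

lemma transfer_embX (ψ : D1.X ≃+ D2.X) (x : D1.X) :
    transfer D1 D2 ψ (D1.embX x) = D2.embX (ψ x) := by
  simpa using transfer_emb_add_embX D1 D2 ψ 0 x

lemma transfer_mul {ψ : D1.X ≃+ D2.X} (hψ : IsBimodHom A ψ)
    (hmul : ∀ x y, transfer D1 D2 ψ (D1.embX x * D1.embX y) = D2.embX (ψ x) * D2.embX (ψ y))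
    (r r' : R1) : transfer D1 D2 ψ (r * r') = transfer D1 D2 ψ r * transfer D1 D2 ψ r' := by
  obtain ⟨⟨a, x⟩, rfl⟩ := D1.decomp.surjective r
  obtain ⟨⟨a', x'⟩, rfl⟩ := D1.decomp.surjective r'
  rw [decomp_apply, decomp_apply, emb_add_embX_mul, map_add (transfer D1 D2 ψ),
    transfer_emb_add_embX, hmul, transfer_emb_add_embX, transfer_emb_add_embX, emb_add_embX_mul,
    map_add ψ, hψ.2.1, hψ.2.2]

noncomputable def transferAlgEquiv {ψ : D1.X ≃+ D2.X} (hψ : IsBimodHom A ψ)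
    (hmul : ∀ x y, transfer D1 D2 ψ (D1.embX x * D1.embX y) = D2.embX (ψ x) * D2.embX (ψ y)) :
    R1 ≃ₐ[k] R2 :=
  { transfer D1 D2 ψ with
    map_mul' := transfer_mul D1 D2 hψ hmul
    commutes' := fun c => by
      simp only [← D1.emb.commutes, ← D2.emb.commutes]
      exact transfer_emb D1 D2 ψ _ }

lemma transfer_embX_mul_embX (he : IsIdempotentElem e) {v : A} (hv : v ∈ centerCorner A e)
    (hvlam : v * lam2 = lam1) {ψ : D1.X ≃+ D2.X} (hψ : IsBimodHom A ψ)
    (hψu : ψ D1.u = v • D2.u) (x y : D1.X) :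
    transfer D1 D2 ψ (D1.embX x * D1.embX y) = D2.embX (ψ x) * D2.embX (ψ y) := by
  let f : D1.X →+ D1.X →+ R2 :=
    ((AddMonoidHom.mul.comp D1.embX).compl₂ D1.embX).compr₂ (transfer D1 D2 ψ).toAddMonoidHom
  let g : D1.X →+ D1.X →+ R2 := (AddMonoidHom.mul.comp (D2.embX.comp ψ.toAddMonoidHom)).compl₂
    (D2.embX.comp ψ.toAddMonoidHom)
  refine DFunLike.congr_fun (DFunLike.congr_fun
    (D1.tensor.addMonoidHom_ext₂ (f := f) (g := g) fun a b a' b' => ?_) x) y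
  simp only [f, g, AddMonoidHom.compr₂_apply, AddMonoidHom.compl₂_apply, AddMonoidHom.comp_apply,
    AddMonoidHom.mul_apply, AddEquiv.coe_toAddMonoidHom]
  rw [embX_smul_op_smul_mul, transfer_embX, hψ.map_smul_op_smul hψu, hψ.map_smul_op_smul hψu,
    hψ.map_smul_op_smul hψu, embX_smul_op_smul_mul]
  have hslide : a * v * e * b * a' * e = a * e * b * a' * v := by
    simpa only [mul_assoc] using mul_mul_e_mul_e_of_mem_centerCorner he hv a (b * a')
  rw [← mul_assoc _ a' v, D2.tensor.mul_smul_op_smul hv (a * v * e * b * a'), ← mul_assoc v,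
    hvlam, ← D2.tensor.mul_e_smul (a * v * e * b * a'), hslide]

lemma exists_unit_of_ringEquiv (he : IsIdempotentElem e) (h1 : lam1 ∈ centerCorner A e)
    (h2 : lam2 ∈ centerCorner A e) (φ : R1 ≃+* R2) (hA : ∀ a : A, φ (D1.emb a) = D2.emb a)
    (hX : Set.range (fun x : D1.X => φ (D1.embX x)) = Set.range D2.embX) :
    ∃ uu ∈ centerCorner A e, (∃ vv ∈ centerCorner A e, uu * vv = e ∧ vv * uu = e) ∧
      lam2 = lam1 * uu := by
  obtain ⟨ψ, hψ, hψφ⟩ := D1.exists_isBimodHom_of_ringHom D2 φ hA fun x => hX ▸ ⟨x, rfl⟩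
  obtain ⟨ψ', hψ', hψ'φ⟩ := D2.exists_isBimodHom_of_ringHom D1 φ.symm
    (fun a => by rw [← hA, φ.symm_apply_apply])
    (fun y => by
      obtain ⟨x, hx⟩ : D2.embX y ∈ Set.range fun x => φ (D1.embX x) := hX ▸ ⟨y, rfl⟩
      exact ⟨x, by rw [← hx, φ.symm_apply_apply]⟩)
  obtain ⟨z, hz, hψu, z', hz', hzz', hz'z⟩ :=
    D1.tensor.exists_unit_of_isBimodHom_of_inverse D2.tensor he hψ hψ'
      (fun x => D1.embX_injective (by rw [hψ'φ, hψφ, φ.symm_apply_apply]))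
      (fun y => D2.embX_injective (by rw [hψφ, hψ'φ, φ.apply_symm_apply]))
  refine ⟨z', hz', ⟨z, hz, hz'z, hzz'⟩, eq_mul_of_mul_mul_mul_eq he hz hz' h1 h2 hz'z ?_⟩
  have hsq₁ : D1.embX D1.u * D1.embX D1.u = D1.embX (lam1 • D1.u) := by
    simpa only [D1.tensor.smul_e, he.eq, e_mul_of_mem_centerCorner he h1] using
      D1.embX_smul_mul_embX_smul he h1 (idem_mem_centerCorner he) (w := e)
  refine D2.tensor.eq_of_smul_eq he (by rw [mul_assoc, mul_e_of_mem_centerCorner he h2])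
    (by rw [mul_assoc, mul_e_of_mem_centerCorner he hz]) (D2.embX_injective ?_)
  calc D2.embX ((z * z * lam2) • D2.u) = D2.embX (z • D2.u) * D2.embX (z • D2.u) :=
        (D2.embX_smul_mul_embX_smul he h2 hz).symm
    _ = φ (D1.embX D1.u * D1.embX D1.u) := by rw [map_mul, ← hψφ, hψu]
    _ = D2.embX ((lam1 * z) • D2.u) := by rw [hsq₁, ← hψφ, hψ.2.1, hψu, smul_smul]

lemma exists_algEquiv_of_unit (he : IsIdempotentElem e) (h1 : lam1 ∈ centerCorner A e)
    {uu vv : A} (huu : uu ∈ centerCorner A e) (hvv : vv ∈ centerCorner A e)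
    (huv : uu * vv = e) (hvu : vv * uu = e) (hlam : lam2 = lam1 * uu) :
    ∃ φ : R1 ≃ₐ[k] R2, (∀ a : A, φ (D1.emb a) = D2.emb a) ∧
      Set.range (fun x : D1.X => φ (D1.embX x)) = Set.range D2.embX := by
  obtain ⟨ψ, hψ, hψu⟩ := D1.tensor.exists_addEquiv_of_unit D2.tensor he hvv huu hvu huv
  have hvlam : vv * lam2 = lam1 := by
    rw [hlam, ← mul_assoc, (commute_of_mem_centerCorner hvv h1).eq, mul_assoc, hvu,
      mul_e_of_mem_centerCorner he h1]
  refine ⟨transferAlgEquiv D1 D2 hψ (transfer_embX_mul_embX D1 D2 he hvv hvlam hψ hψu),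
    transfer_emb D1 D2 ψ, ?_⟩
  change Set.range (fun x => transfer D1 D2 ψ (D1.embX x)) = _
  simp only [transfer_embX]
  exact ψ.surjective.range_comp D2.embX

end Pair

end MirrorData

end Mirror

/-- For `λ₁, λ₂ ∈ Z(eAe)`, the mirror-reflective algebras
`R(A, e, λ₁)` and `R(A, e, λ₂)` are isomorphic as idealized extensions of `A` by
`Ae ⊗_{eAe} eA` if and only if `λ₂ = λ₁ · u` for some invertible element `u` of
`Z(eAe)`. -/
theorem mirror_reflective_iso_iff_unit
    (e : A) (he : IsIdempotentElem e)
    (lam1 lam2 : A) (h1 : lam1 ∈ centerCorner A e) (h2 : lam2 ∈ centerCorner A e)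
    (R1 R2 : Type u) [Ring R1] [Algebra k R1] [Ring R2] [Algebra k R2]
    (D1 : MirrorData k A e lam1 R1) (D2 : MirrorData k A e lam2 R2) :
    (∃ φ : R1 ≃ₐ[k] R2, (∀ a : A, φ (D1.emb a) = D2.emb a) ∧
        Set.range (fun x : D1.X => φ (D1.embX x)) = Set.range D2.embX) ↔
      ∃ uu ∈ centerCorner A e, (∃ vv ∈ centerCorner A e, uu * vv = e ∧ vv * uu = e) ∧
        lam2 = lam1 * uu := by
  constructor
  · rintro ⟨φ, hA, hX⟩
    exact D1.exists_unit_of_ringEquiv D2 he h1 h2 φ.toRingEquiv hA hX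
  · rintro ⟨uu, huu, ⟨vv, hvv, huv, hvu⟩, hlam⟩
    exact D1.exists_algEquiv_of_unit D2 he h1 huu hvv huv hvu hlam

end Paper
end

section
/- Let k be a commutative ring, A a k-algebra, e an idempotent of A, Λ := eAe, and Δ0 := Ae ⊗_Λ eA. Then the map Z(Λ) → Hom_{A^e}(Δ0 ⊗_A Δ0, Δ0) sending λ to ω_λ is a bijection (an isomorphism of k-modules) from the center of Λ onto the set of A-A-bimodule homomorphisms from Δ0 ⊗_A Δ0 to Δ0. -/
/-!
Common setup: bimodules over a ring `A`, a universal-property description of the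
`A`-`A`-bimodule `Ae ⊗_{eAe} eA` (with distinguished element `u = e ⊗ e`),
a universal-property description of tensor products of bimodules over `A`,
and the center of the corner ring `eAe`.
-/

open MulOpposite

universe u

namespace Paper

open MulOpposite

/-- The map `Z(eAe) → Hom_{A^e}(Δ₀ ⊗_A Δ₀, Δ₀)`, `λ ↦ ω_λ`, is a
bijection (an isomorphism of `k`-modules), where `Δ₀ = Ae ⊗_{eAe} eA`. -/
theorem omega_is_bijection
    (k : Type u) [CommRing k] (A : Type u) [Ring A] [Algebra k A]
    (e : A) (he : IsIdempotentElem e)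
    (X : Type u) [AddCommGroup X] [Module A X] [Module Aᵐᵒᵖ X] [SMulCommClass A Aᵐᵒᵖ X]
    (u : X) (hX : IsAeTensor A e X u)
    (T : Type u) [AddCommGroup T] [Module A T] [Module Aᵐᵒᵖ T] [SMulCommClass A Aᵐᵒᵖ T]
    (t : X → X → T) (hT : IsTensorOverA A t) :
    ∃ Ω : centerCorner A e → {g : T → X // IsBimodHom A g},
      -- `Ω λ = ω_λ` is given on generators by `(be ⊗ ec) ⊗ (b'e ⊗ ec') ↦ becb'e ⊗ λec'`
      (∀ (lam : centerCorner A e) (b c b' c' : A),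
        (Ω lam).1 (t (tmk A e u b c) (tmk A e u b' c')) =
          tmk A e u (b * e * c * b') (lam.1 * c')) ∧
      -- `λ ↦ ω_λ` is a bijection onto the set of bimodule homomorphisms `Δ₀ ⊗_A Δ₀ → Δ₀`
      Function.Bijective Ω ∧
      -- `λ ↦ ω_λ` is additive
      (∀ l m s : centerCorner A e, s.1 = l.1 + m.1 →
        ∀ x : T, (Ω s).1 x = (Ω l).1 x + (Ω m).1 x) ∧
      -- `λ ↦ ω_λ` is `k`-linear
      (∀ (c : k) (l s : centerCorner A e), s.1 = algebraMap k A c * l.1 →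
        ∀ x : T, (Ω s).1 x = algebraMap k A c • (Ω l).1 x) := by
  classical
  -- mul helpers
  have hee : ∀ x : A, e * (e * x) = e * x := fun x => by rw [← mul_assoc, he]
  have hoo : ∀ (a b : A) (x : X), op a • op b • x = op (b * a) • x := fun a b x => by
    rw [smul_smul, ← op_mul]
  have hss : ∀ (a b : A) (x : X), a • b • x = (a * b) • x := fun a b x => smul_smul a b x
  have hcorner : ∀ z : A, z = e * z * e → e * z = z ∧ z * e = z := by
    intro z hz
    constructor
    · conv_lhs => rw [hz]
      rw [← mul_assoc, ← mul_assoc, he, ← hz]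
    · conv_lhs => rw [hz]
      rw [mul_assoc, he, ← hz]
  -- the "multiplication" bimodule map E : X → A, E (a • op b • u) = a * (e * b)
  have hUE : ∃! g : X → A, IsBimodHom A g ∧ g u = e :=
    hX.universal ⟨A⟩ e (show e * e = e from he)
      (show e * e = e from he)
      (fun a => show (e * a * e) * e = e * (e * a * e) by
        rw [mul_assoc, he, ← mul_assoc, ← mul_assoc, he])
  obtain ⟨E, ⟨hE, hEu⟩, -⟩ := hUE
  have hEg : ∀ a b : A, E (a • op b • u) = a * (e * b) := by
    intro a b
    rw [hE.2.1, hE.2.2, hEu]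
    rfl
  have hE0 : E 0 = 0 := by
    have h := hE.2.1 0 0
    rwa [zero_smul, zero_smul] at h
  -- generation : every element of X lies in the span of the op b • u
  have hstab : ∀ (c : A) (x : X),
      x ∈ Submodule.span A {y : X | ∃ b : A, y = op b • u} →
      op c • x ∈ Submodule.span A {y : X | ∃ b : A, y = op b • u} := by
    intro c x hx
    induction hx using Submodule.span_induction with
    | mem y hy =>
      obtain ⟨b, rfl⟩ := hy
      exact Submodule.subset_span ⟨b * c, hoo c b u⟩
    | zero => rw [smul_zero]; exact Submodule.zero_mem _
    | add x y hx hy ihx ihy => rw [smul_add]; exact Submodule.add_mem _ ihx ihy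
    | smul a x hx ih => rw [← smul_comm a (op c) x]; exact Submodule.smul_mem _ a ih
  have hgen : ∀ x : X, x ∈ Submodule.span A {y : X | ∃ b : A, y = op b • u} := by
    set S := Submodule.span A {y : X | ∃ b : A, y = op b • u} with hSdef
    have hu_mem : u ∈ S := Submodule.subset_span ⟨e, hX.op_smul_e.symm⟩
    letI : SMul Aᵐᵒᵖ ↥S := ⟨fun c x => ⟨c • x.1, by
      have h := hstab c.unop x.1 x.2
      rwa [op_unop] at h⟩⟩
    letI : Module Aᵐᵒᵖ ↥S := Function.Injective.module Aᵐᵒᵖ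
      { toFun := Subtype.val, map_zero' := rfl, map_add' := fun _ _ => rfl }
      Subtype.coe_injective (fun _ _ => rfl)
    letI : SMulCommClass A Aᵐᵒᵖ ↥S := ⟨fun a c x => Subtype.ext (smul_comm a c x.1)⟩
    have hUS : ∃! g : X → ↥S, IsBimodHom A g ∧ g u = ⟨u, hu_mem⟩ :=
      hX.universal ⟨↥S⟩ ⟨u, hu_mem⟩
        (Subtype.ext hX.smul_e) (Subtype.ext hX.op_smul_e)
        (fun a => Subtype.ext (hX.balance a))
    obtain ⟨gS, ⟨hgS, hgSu⟩, -⟩ := hUS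
    have hUid : ∃! g : X → X, IsBimodHom A g ∧ g u = u :=
      hX.universal ⟨X⟩ u hX.smul_e hX.op_smul_e hX.balance
    obtain ⟨idX, ⟨hid, hidu⟩, hiduniq⟩ := hUid
    have h1 : (fun x => (gS x).1) = idX := by
      refine hiduniq _ ⟨⟨fun x y => ?_, fun a x => ?_, fun a x => ?_⟩, ?_⟩
      · exact congrArg Subtype.val (hgS.1 x y)
      · exact congrArg Subtype.val (hgS.2.1 a x)
      · exact congrArg Subtype.val (hgS.2.2 a x)
      · exact congrArg Subtype.val hgSu
    have h2 : (id : X → X) = idX :=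
      hiduniq _ ⟨⟨fun _ _ => rfl, fun _ _ => rfl, fun _ _ => rfl⟩, rfl⟩
    intro x
    have hx : (gS x).1 = x := congrFun (h1.trans h2.symm) x
    exact hx ▸ (gS x).2
  -- tensor product helpers
  obtain ⟨tadd1, tadd2, tbal, tleft, tright⟩ := hT.balanced
  have t0l : ∀ y : X, t 0 y = 0 := fun y => by
    have h := tleft 0 0 y
    rwa [zero_smul, zero_smul] at h
  have t0r : ∀ x : X, t x 0 = 0 := fun x => by
    have h := tright 0 x 0
    rwa [op_zero, zero_smul, zero_smul] at h
  have hueq : ∀ z : X, t u (e • z) = t u z := fun z => by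
    have h := tbal e u z
    rw [hX.op_smul_e] at h
    exact h.symm
  have tu_smul : ∀ c : A, t u (c • u) = op (e * c * e) • t u u := fun c => by
    calc t u (c • u) = t u ((c * e) • u) := by rw [← hss, hX.smul_e]
      _ = t u (e • (c * e) • u) := (hueq _).symm
      _ = t u ((e * (c * e)) • u) := by rw [hss]
      _ = t u ((e * c * e) • u) := by rw [mul_assoc]
      _ = t u (op (e * c * e) • u) := by rw [hX.balance]
      _ = op (e * c * e) • t u u := tright _ _ _
  -- master uniqueness: a bimodule hom T → X is determined by its value at t u u
  have master1 : ∀ g₁ g₂ : T → X, IsBimodHom A g₁ → IsBimodHom A g₂ →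
      g₁ (t u u) = g₂ (t u u) → g₁ = g₂ := by
    intro g₁ g₂ h1 h2 hw
    obtain ⟨h1a, h1l, h1r⟩ := h1
    obtain ⟨h2a, h2l, h2r⟩ := h2
    have g10 : g₁ 0 = 0 := by
      have h := h1l 0 0; rwa [zero_smul, zero_smul] at h
    have g20 : g₂ 0 = 0 := by
      have h := h2l 0 0; rwa [zero_smul, zero_smul] at h
    have step1 : ∀ x : X, g₁ (t x u) = g₂ (t x u) := by
      intro x
      induction hgen x using Submodule.span_induction with
      | mem y hy =>
        obtain ⟨b, rfl⟩ := hy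
        rw [tbal, tu_smul, h1r, h2r, hw]
      | zero => rw [t0l, g10, g20]
      | add x y hx hy ihx ihy => rw [tadd1, h1a, h2a, ihx, ihy]
      | smul a x hx ih => rw [tleft, h1l, h2l, ih]
    have step2 : ∀ (y x : X), g₁ (t x y) = g₂ (t x y) := by
      intro y
      induction hgen y using Submodule.span_induction with
      | mem z hz =>
        obtain ⟨b, rfl⟩ := hz
        intro x
        rw [tright, h1r, h2r, step1]
      | zero => intro x; rw [t0r, g10, g20]
      | add y z hy hz ihy ihz => intro x; rw [tadd2, h1a, h2a, ihy x, ihz x]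
      | smul a y hy ih => intro x; rw [← tbal, ih]
    have hbal : IsBalancedBiadd A (fun x y => g₂ (t x y)) :=
      ⟨fun x x' y => by
          show g₂ (t (x + x') y) = g₂ (t x y) + g₂ (t x' y)
          rw [tadd1, h2a],
        fun x y y' => by
          show g₂ (t x (y + y')) = g₂ (t x y) + g₂ (t x y')
          rw [tadd2, h2a],
        fun a x y => by
          show g₂ (t (op a • x) y) = g₂ (t x (a • y))
          rw [tbal],
        fun a x y => by
          show g₂ (t (a • x) y) = a • g₂ (t x y)
          rw [tleft, h2l],
        fun a x y => by
          show g₂ (t x (op a • y)) = op a • g₂ (t x y)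
          rw [tright, h2r]⟩
    have hUg : ∃! g : T → X, IsBimodHom A g ∧ ∀ x y, g (t x y) = g₂ (t x y) :=
      hT.universal ⟨X⟩ (fun x y => g₂ (t x y)) hbal
    obtain ⟨g', -, hg'uniq⟩ := hUg
    have e1 := hg'uniq g₁ ⟨⟨h1a, h1l, h1r⟩, fun x y => step2 y x⟩
    have e2 := hg'uniq g₂ ⟨⟨h2a, h2l, h2r⟩, fun x y => rfl⟩
    rw [e1, e2]
  -- key form lemma: elements fixed by e on both sides are of the form op λ • u
  have keyL : ∀ x : X, ∀ a : A,
      (e * a) • (op e • x) = op (E ((e * a) • (op e • x))) • u := by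
    intro x
    induction hgen x using Submodule.span_induction with
    | mem y hy =>
      obtain ⟨b, rfl⟩ := hy
      intro a
      have hz : (e * a) • (op e • op b • u) = op ((e * a * e) * (b * e)) • u := by
        rw [hoo]
        calc (e * a) • op (b * e) • u
            = (e * a) • op (b * e) • (e • u) := by rw [hX.smul_e]
          _ = (e * a) • e • op (b * e) • u := by rw [smul_comm e (op (b * e)) u]
          _ = (e * a * e) • op (b * e) • u := by rw [hss]
          _ = op (b * e) • ((e * a * e) • u) := smul_comm _ _ _
          _ = op (b * e) • (op (e * a * e) • u) := by rw [hX.balance]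
          _ = op ((e * a * e) * (b * e)) • u := hoo _ _ _
      have hEz : E ((e * a) • (op e • op b • u)) = (e * a * e) * (b * e) := by
        rw [hoo, hEg]
        simp [mul_assoc]
      rw [hEz, hz]
    | zero =>
      intro a
      rw [smul_zero, smul_zero, hE0, op_zero, zero_smul]
    | add x y hx hy ihx ihy =>
      intro a
      rw [smul_add, smul_add, hE.1, op_add, add_smul]
      exact congrArg₂ HAdd.hAdd (ihx a) (ihy a)
    | smul c x hx ih =>
      intro a
      have hrw : (e * a) • (op e • c • x) = (e * (a * c)) • (op e • x) := by
        rw [← smul_comm c (op e) x, hss, mul_assoc]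
      rw [hrw]
      exact ih (a * c)
  have wform : ∀ w : X, e • w = w → op e • w = w → w = op (E w) • u := by
    intro w hw1 hw2
    have h := keyL w 1
    rwa [mul_one, hw2, hw1] at h
  -- construction of ω_λ for λ in the center of the corner ring
  have key : ∀ lam : centerCorner A e, ∃ g : T → X, IsBimodHom A g ∧
      (∀ b c b' c' : A, g (t (tmk A e u b c) (tmk A e u b' c')) =
        tmk A e u (b * e * c * b') (lam.1 * c')) ∧
      g (t u u) = op lam.1 • u := by
    rintro ⟨lam, hlam1, hlam2⟩
    have hel : e * lam = lam := (hcorner lam hlam1).1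
    have hle : lam * e = lam := (hcorner lam hlam1).2
    -- right multiplication by λ on X
    have c1 : e • (op lam • u) = op lam • u := by rw [smul_comm, hX.smul_e]
    have c2 : op e • op lam • u = op lam • u := by rw [hoo, hle]
    have c3 : ∀ a : A, (e * a * e) • (op lam • u) = op (e * a * e) • (op lam • u) := by
      intro a
      calc (e * a * e) • (op lam • u) = op lam • ((e * a * e) • u) := smul_comm _ _ _
        _ = op lam • (op (e * a * e) • u) := by rw [hX.balance]
        _ = op ((e * a * e) * lam) • u := hoo _ _ _
        _ = op (lam * (e * a * e)) • u := by rw [← hlam2 a]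
        _ = op (e * a * e) • op lam • u := (hoo _ _ _).symm
    have hUr : ∃! g : X → X, IsBimodHom A g ∧ g u = op lam • u :=
      hX.universal ⟨X⟩ (op lam • u) c1 c2 c3
    obtain ⟨r, ⟨hr, hru⟩, -⟩ := hUr
    have hrg : ∀ a b : A, r (a • op b • u) = a • op (lam * b) • u := by
      intro a b
      rw [hr.2.1, hr.2.2, hru, hoo]
    have hsbal : IsBalancedBiadd A (fun x y => E x • r y) := by
      refine ⟨fun x x' y => ?_, fun x y y' => ?_,
        fun a x y => ?_, fun a x y => ?_, fun a x y => ?_⟩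
      · show E (x + x') • r y = E x • r y + E x' • r y
        rw [hE.1, add_smul]
      · show E x • r (y + y') = E x • r y + E x • r y'
        rw [hr.1, smul_add]
      · show E (op a • x) • r y = E x • r (a • y)
        rw [hE.2.2, hr.2.1]
        show (E x * a) • r y = E x • a • r y
        rw [mul_smul]
      · show E (a • x) • r y = a • (E x • r y)
        rw [hE.2.1]
        show (a * E x) • r y = a • E x • r y
        rw [mul_smul]
      · show E x • r (op a • y) = op a • (E x • r y)
        rw [hr.2.2]
        exact smul_comm _ _ _
    have hUW : ∃! g : T → X, IsBimodHom A g ∧ ∀ x y, g (t x y) = E x • r y :=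
      hT.universal ⟨X⟩ (fun x y => E x • r y) hsbal
    obtain ⟨W, ⟨hW, hWt⟩, -⟩ := hUW
    refine ⟨W, hW, fun b c b' c' => ?_, ?_⟩
    · have sc1 : ((b * e) * (e * (e * c))) * (b' * e) = b * e * c * b' * e := by
        simp only [mul_assoc, hee]
      have sc2 : lam * (e * c') = e * (lam * c') := by
        rw [← mul_assoc, hle, ← mul_assoc, hel]
      show W (t ((b * e) • (op (e * c) • u)) ((b' * e) • (op (e * c') • u)))
        = ((b * e * c * b') * e) • (op (e * (lam * c')) • u)
      rw [hWt, hEg, hrg, hss, sc1, ← sc2]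
    · have h := hWt u u
      rw [hEu, hru, c1] at h
      exact h
  -- the map Ω
  refine ⟨fun lam => ⟨(key lam).choose, (key lam).choose_spec.1⟩,
    fun lam => (key lam).choose_spec.2.1, ⟨?_, ?_⟩, ?_, ?_⟩
  -- injectivity
  · intro l m h
    have h' : (key l).choose (t u u) = (key m).choose (t u u) :=
      congrFun (congrArg Subtype.val h) (t u u)
    rw [(key l).choose_spec.2.2, (key m).choose_spec.2.2] at h'
    have hl : E (op l.1 • u) = l.1 := by
      rw [hE.2.2, hEu]
      exact (hcorner l.1 l.2.1).1
    have hm : E (op m.1 • u) = m.1 := by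
      rw [hE.2.2, hEu]
      exact (hcorner m.1 m.2.1).1
    apply Subtype.ext
    rw [← hl, ← hm, h']
  -- surjectivity
  · rintro ⟨g, hg⟩
    set w := g (t u u) with hwdef
    have hew : e • w = w := by
      calc e • g (t u u) = g (e • t u u) := (hg.2.1 e _).symm
        _ = g (t (e • u) u) := by rw [← tleft]
        _ = g (t u u) := by rw [hX.smul_e]
    have hoew : op e • w = w := by
      calc op e • g (t u u) = g (op e • t u u) := (hg.2.2 (op e) _).symm
        _ = g (t u (op e • u)) := by rw [← tright]
        _ = g (t u u) := by rw [hX.op_smul_e]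
    have hbalw : ∀ a : A, (e * a * e) • w = op (e * a * e) • w := by
      intro a
      calc (e * a * e) • g (t u u) = g ((e * a * e) • t u u) := (hg.2.1 _ _).symm
        _ = g (t ((e * a * e) • u) u) := by rw [← tleft]
        _ = g (t (op (e * a * e) • u) u) := by rw [hX.balance]
        _ = g (t u ((e * a * e) • u)) := by rw [tbal]
        _ = g (t u (op (e * a * e) • u)) := by rw [hX.balance]
        _ = g (op (e * a * e) • t u u) := by rw [tright]
        _ = op (e * a * e) • g (t u u) := hg.2.2 _ _
    have h1 : e * E w = E w := by
      have h := hE.2.1 e w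
      rw [hew] at h
      exact h.symm
    have h2 : E w * e = E w := by
      have h := hE.2.2 (op e) w
      rw [hoew] at h
      exact h.symm
    have hmem : E w ∈ centerCorner A e := by
      constructor
      · rw [h1, h2]
      · intro a
        have h3 := hE.2.2 (op (e * a * e)) w
        have h4 := hE.2.1 (e * a * e) w
        rw [hbalw a] at h4
        exact (h3.symm.trans h4 : op (e * a * e) • E w = (e * a * e) • E w)
    have hwform : w = op (E w) • u := wform w hew hoew
    refine ⟨⟨E w, hmem⟩, Subtype.ext ?_⟩
    apply master1 _ _ (key ⟨E w, hmem⟩).choose_spec.1 hg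
    rw [(key ⟨E w, hmem⟩).choose_spec.2.2, ← hwdef]
    exact hwform.symm
  -- additivity
  · intro l m s hs x
    have hbm : IsBimodHom A (fun z => (key l).choose z + (key m).choose z) := by
      obtain ⟨la, ll, lr⟩ := (key l).choose_spec.1
      obtain ⟨ma, ml, mr⟩ := (key m).choose_spec.1
      refine ⟨fun x y => ?_, fun a x => ?_, fun a x => ?_⟩
      · show (key l).choose (x + y) + (key m).choose (x + y) =
          ((key l).choose x + (key m).choose x) + ((key l).choose y + (key m).choose y)
        rw [la, ma]
        abel
      · show (key l).choose (a • x) + (key m).choose (a • x) =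
          a • ((key l).choose x + (key m).choose x)
        rw [ll, ml, smul_add]
      · show (key l).choose (a • x) + (key m).choose (a • x) =
          a • ((key l).choose x + (key m).choose x)
        rw [lr, mr, smul_add]
    have hval : (key s).choose (t u u) =
        (fun z => (key l).choose z + (key m).choose z) (t u u) := by
      show (key s).choose (t u u) = (key l).choose (t u u) + (key m).choose (t u u)
      rw [(key s).choose_spec.2.2, (key l).choose_spec.2.2, (key m).choose_spec.2.2,
        hs, op_add, add_smul]
    exact congrFun (master1 _ _ (key s).choose_spec.1 hbm hval) x
  -- k-linearity
  · intro c l s hs x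
    set mc := algebraMap k A c with hmc
    have hcomm : ∀ a : A, mc * a = a * mc := fun a => by
      rw [hmc]; exact Algebra.commutes c a
    have halg : op mc • u = mc • u := by
      have hc1 : e * mc * e = mc * e := by
        rw [← hcomm e, mul_assoc, he]
      have h2 := hX.balance mc
      rw [hc1] at h2
      calc op mc • u = op mc • (op e • u) := by rw [hX.op_smul_e]
        _ = op (e * mc) • u := hoo _ _ _
        _ = op (mc * e) • u := by rw [← hcomm e]
        _ = (mc * e) • u := h2.symm
        _ = mc • (e • u) := (hss _ _ _).symm
        _ = mc • u := by rw [hX.smul_e]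
    have hbm : IsBimodHom A (fun z => mc • (key l).choose z) := by
      obtain ⟨la, ll, lr⟩ := (key l).choose_spec.1
      refine ⟨fun x y => ?_, fun a x => ?_, fun a x => ?_⟩
      · show mc • (key l).choose (x + y) = mc • (key l).choose x + mc • (key l).choose y
        rw [la, smul_add]
      · show mc • (key l).choose (a • x) = a • (mc • (key l).choose x)
        rw [ll, hss, hss, hcomm a]
      · show mc • (key l).choose (a • x) = a • (mc • (key l).choose x)
        rw [lr]
        exact smul_comm _ _ _

    have hval : (key s).choose (t u u) = (fun z => mc • (key l).choose z) (t u u) := by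
      show (key s).choose (t u u) = mc • (key l).choose (t u u)
      rw [(key s).choose_spec.2.2, (key l).choose_spec.2.2, hs]
      calc op (mc * l.1) • u = op l.1 • op mc • u := (hoo _ _ _).symm
        _ = op l.1 • mc • u := by rw [halg]
        _ = mc • op l.1 • u := (smul_comm mc (op l.1) u).symm
    exact congrFun (master1 _ _ (key s).choose_spec.1 hbm hval) x

end Paper
end
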